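/- For every F ∈ L²([−π, π]) and f(z) = (1/2π) ∫_{−π}^{π} F(t) e^{−izt} dt, one has lim_{|z| → ∞} |f(z)| / √(K(z, z̄)) = 0, where for z = x + iy, K(z, z̄) = (e^{2πy} − e^{−2πy})/(4πy), interpreted as 1 when y = 0. -/

import Mathlib

open MeasureTheory

/-- The Paley–Wiener transform `f(z) = (1/2π) ∫_{−π}^{π} F(t) e^{−izt} dt`. -/
noncomputable def pwTransform (F : ℝ → ℂ) (z : ℂ) : ℂ :=
  (1 / (2 * Real.pi) : ℝ) •
    ∫ t in Set.Icc (-Real.pi) Real.pi, F t * Complex.exp (-Complex.I * z * t)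

/-- The diagonal of the Paley–Wiener reproducing kernel:
`K(z, z̄) = (e^{2πy} − e^{−2πy})/(4πy)` for `z = x + iy`, interpreted as `1` when `y = 0`. -/
noncomputable def pwKernelDiag (y : ℝ) : ℝ :=
  if y = 0 then 1
  else (Real.exp (2 * Real.pi * y) - Real.exp (-(2 * Real.pi * y))) / (4 * Real.pi * y)

/-!
By Cauchy–Schwarz, `|f(z)| ≤ ‖F‖₂ · √(K(z, z̄) / 2π)`, so `|f(z)| / √(K(z, z̄))` depends on
`F ∈ L²` uniformly in `z`, and it suffices to treat smooth `F`, which are dense. For those,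
integration by parts gives `|z f(z)| = O(e^{π|y|})`, while `e^{2π|y|} ≤ (4π|y| + 1) K(z, z̄)`;
hence the ratio is `O(√|z| / |z|)`.
-/

open Real Filter Topology Set

lemma pwKernelDiag_eq_sinh_div {y : ℝ} (hy : y ≠ 0) :
    pwKernelDiag y = sinh (2 * π * y) / (2 * π * y) := by
  rw [pwKernelDiag, if_neg hy, sinh_eq]
  field_simp
  ring

lemma pwKernelDiag_abs (y : ℝ) : pwKernelDiag |y| = pwKernelDiag y := by
  rcases eq_or_ne y 0 with rfl | hy
  · simp
  rw [pwKernelDiag_eq_sinh_div hy, pwKernelDiag_eq_sinh_div (abs_ne_zero.2 hy)]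
  rcases abs_cases y with ⟨h, -⟩ | ⟨h, -⟩ <;> rw [h]
  rw [mul_neg, sinh_neg, neg_div_neg_eq]

lemma one_le_pwKernelDiag (y : ℝ) : 1 ≤ pwKernelDiag y := by
  rcases eq_or_ne y 0 with rfl | hy
  · simp [pwKernelDiag]
  rw [← pwKernelDiag_abs, pwKernelDiag_eq_sinh_div (abs_ne_zero.2 hy),
    one_le_div (by positivity)]
  exact self_le_sinh_iff.2 (by positivity)

lemma pwKernelDiag_pos (y : ℝ) : 0 < pwKernelDiag y :=
  one_pos.trans_le (one_le_pwKernelDiag y)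

/-- With `a = 2π|y|`: `e^a = 2 sinh a + e^{-a}` and `e^{-a} ≤ 1 ≤ sinh a / a = K`. -/
lemma exp_two_pi_abs_le_pwKernelDiag (y : ℝ) :
    exp (2 * π * |y|) ≤ (4 * π * |y| + 1) * pwKernelDiag y := by
  rcases eq_or_ne y 0 with rfl | hy
  · simp [pwKernelDiag]
  have ha : 0 < 2 * π * |y| := by positivity
  have hK := one_le_pwKernelDiag y
  have hsinh : sinh (2 * π * |y|) = 2 * π * |y| * pwKernelDiag y := by
    rw [← pwKernelDiag_abs, pwKernelDiag_eq_sinh_div (abs_ne_zero.2 hy)]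
    field_simp
  have hexp : exp (2 * π * |y|) = 2 * sinh (2 * π * |y|) + exp (-(2 * π * |y|)) := by
    rw [sinh_eq]; ring
  have hneg : exp (-(2 * π * |y|)) ≤ 1 := exp_le_one_iff.2 (by linarith)
  nlinarith

lemma exp_pi_abs_le_sqrt_mul_sqrt_pwKernelDiag (y : ℝ) :
    exp (π * |y|) ≤ √(4 * π * |y| + 1) * √(pwKernelDiag y) := by
  rw [← sqrt_mul (by positivity : (0:ℝ) ≤ 4 * π * |y| + 1), le_sqrt' (exp_pos _),
    ← exp_nat_mul]
  convert exp_two_pi_abs_le_pwKernelDiag y using 2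
  push_cast
  ring

lemma integral_exp_two_mul_Icc (y : ℝ) :
    ∫ t in Icc (-π) π, exp (2 * y * t) = 2 * π * pwKernelDiag y := by
  rw [integral_Icc_eq_integral_Ioc, ← intervalIntegral.integral_of_le (by linarith [pi_pos])]
  rcases eq_or_ne y 0 with rfl | hy
  · simp [pwKernelDiag]
    ring
  rw [intervalIntegral.integral_comp_mul_left exp (mul_ne_zero two_ne_zero hy), integral_exp,
    pwKernelDiag, if_neg hy]
  field_simp
  ring_nf
  field_simp

lemma norm_cexp_neg_I_mul (z : ℂ) (t : ℝ) :
    ‖Complex.exp (-Complex.I * z * t)‖ = exp (z.im * t) := by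
  rw [Complex.norm_exp]
  congr 1
  simp [Complex.mul_re]

lemma norm_cexp_neg_I_mul_le (z : ℂ) {t : ℝ} (ht : t ∈ Icc (-π) π) :
    ‖Complex.exp (-Complex.I * z * t)‖ ≤ exp (π * |z.im|) := by
  rw [norm_cexp_neg_I_mul, exp_le_exp]
  calc z.im * t ≤ |z.im| * |t| := (le_abs_self _).trans (abs_mul _ _).le
    _ ≤ |z.im| * π := by gcongr; exact abs_le.2 ht
    _ = π * |z.im| := mul_comm _ _

lemma integrableOn_mul_cexp_neg_I_mul {F : ℝ → ℂ} (hF : IntegrableOn F (Icc (-π) π)) (z : ℂ) :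
    IntegrableOn (fun t : ℝ => F t * Complex.exp (-Complex.I * z * t)) (Icc (-π) π) :=
  hF.mul_continuousOn (by fun_prop) isCompact_Icc

lemma pwTransform_sub {F G : ℝ → ℂ} (hF : IntegrableOn F (Icc (-π) π))
    (hG : IntegrableOn G (Icc (-π) π)) (z : ℂ) :
    pwTransform (F - G) z = pwTransform F z - pwTransform G z := by
  simp only [pwTransform, Pi.sub_apply, sub_mul]
  rw [integral_sub (integrableOn_mul_cexp_neg_I_mul hF z)
    (integrableOn_mul_cexp_neg_I_mul hG z), smul_sub]

lemma norm_pwTransform_le_eLpNorm_mul_sqrt {F : ℝ → ℂ}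
    (hF : MemLp F 2 (volume.restrict (Icc (-π) π))) (z : ℂ) :
    ‖pwTransform F z‖ ≤
      (eLpNorm F 2 (volume.restrict (Icc (-π) π))).toReal / √(2 * π) * √(pwKernelDiag z.im) := by
  set e : ℝ → ℂ := fun t => Complex.exp (-Complex.I * z * t)
  have he : MemLp e (ENNReal.ofReal 2) (volume.restrict (Icc (-π) π)) := by
    refine MemLp.of_bound (by fun_prop) (exp (π * |z.im|)) ?_
    filter_upwards [ae_restrict_mem measurableSet_Icc] with t ht
    exact norm_cexp_neg_I_mul_le z ht
  have hF' : MemLp F (ENNReal.ofReal 2) (volume.restrict (Icc (-π) π)) := by simpa using hF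
  have hL2 : (eLpNorm F 2 (volume.restrict (Icc (-π) π))).toReal =
      (∫ t in Icc (-π) π, ‖F t‖ ^ (2 : ℝ)) ^ (1 / (2 : ℝ)) := by
    rw [hF.eLpNorm_eq_integral_rpow_norm two_ne_zero ENNReal.ofNat_ne_top,
      ENNReal.toReal_ofReal (by positivity)]
    norm_num
  have he2 : (∫ t in Icc (-π) π, ‖e t‖ ^ (2 : ℝ)) ^ (1 / (2 : ℝ)) =
      √(2 * π) * √(pwKernelDiag z.im) := by
    have : ∀ t : ℝ, ‖e t‖ ^ (2 : ℝ) = exp (2 * z.im * t) := fun t => by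
      rw [rpow_two, norm_cexp_neg_I_mul, ← exp_nat_mul]
      push_cast
      ring_nf
    simp_rw [this, integral_exp_two_mul_Icc, ← sqrt_eq_rpow]
    exact sqrt_mul (by positivity) _
  have hCS := integral_mul_norm_le_Lp_mul_Lq Real.HolderConjugate.two_two hF' he
  rw [← hL2, he2] at hCS
  calc ‖pwTransform F z‖ = (2 * π)⁻¹ * ‖∫ t in Icc (-π) π, F t * e t‖ := by
        rw [pwTransform, norm_smul, norm_of_nonneg (by positivity), one_div]
    _ ≤ (2 * π)⁻¹ * ∫ t in Icc (-π) π, ‖F t‖ * ‖e t‖ := by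
        gcongr
        simpa only [norm_mul] using norm_integral_le_integral_norm (fun t => F t * e t)
    _ ≤ (2 * π)⁻¹ * ((eLpNorm F 2 (volume.restrict (Icc (-π) π))).toReal *
          (√(2 * π) * √(pwKernelDiag z.im))) := by gcongr
    _ = (eLpNorm F 2 (volume.restrict (Icc (-π) π))).toReal * (√(2 * π) / (2 * π)) *
          √(pwKernelDiag z.im) := by ring
    _ = _ := by rw [sqrt_div_self', one_div, div_eq_mul_inv]

lemma neg_I_mul_integral_mul_cexp {H : ℝ → ℂ} (hH : ContDiff ℝ 1 H) (z : ℂ) :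
    -Complex.I * z * ∫ t in -π..π, H t * Complex.exp (-Complex.I * z * t) =
      H π * Complex.exp (-Complex.I * z * π) - H (-π) * Complex.exp (-Complex.I * z * ↑(-π)) -
        ∫ t in -π..π, deriv H t * Complex.exp (-Complex.I * z * t) := by
  have he : ∀ t : ℝ, HasDerivAt (fun t : ℝ => Complex.exp (-Complex.I * z * t))
      (-Complex.I * z * Complex.exp (-Complex.I * z * t)) t := fun t => by
    simpa [mul_comm] using ((hasDerivAt_id (t : ℂ)).const_mul (-Complex.I * z)).cexp.comp_ofReal
  have hH' := hH.continuous_deriv le_rfl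
  have hparts := intervalIntegral.integral_deriv_mul_eq_sub (a := -π) (b := π)
    (fun t _ => (hH.differentiable one_ne_zero t).hasDerivAt) (fun t _ => he t)
    (hH'.intervalIntegrable _ _) ((by fun_prop : Continuous fun t : ℝ =>
      -Complex.I * z * Complex.exp (-Complex.I * z * t)).intervalIntegrable _ _)
  rw [intervalIntegral.integral_add
    ((by fun_prop : Continuous fun t : ℝ =>
      deriv H t * Complex.exp (-Complex.I * z * t)).intervalIntegrable _ _)
    ((by fun_prop : Continuous fun t : ℝ =>
      H t * (-Complex.I * z * Complex.exp (-Complex.I * z * t))).intervalIntegrable _ _)] at hparts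
  rw [← intervalIntegral.integral_const_mul, ← hparts]
  ring_nf

lemma exists_norm_mul_norm_pwTransform_le {H : ℝ → ℂ} (hH : ContDiff ℝ 1 H) :
    ∃ C, ∀ z : ℂ, ‖z‖ * ‖pwTransform H z‖ ≤ C * exp (π * |z.im|) := by
  refine ⟨(2 * π)⁻¹ * (‖H π‖ + ‖H (-π)‖ + ∫ t in -π..π, ‖deriv H t‖), fun z => ?_⟩
  have hB : ∀ t ∈ Icc (-π) π, ‖Complex.exp (-Complex.I * z * t)‖ ≤ exp (π * |z.im|) :=
    fun t ht => norm_cexp_neg_I_mul_le z ht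
  have hπ : -π ≤ π := by linarith [pi_pos]
  have hH' := hH.continuous_deriv le_rfl
  have hrest : ‖∫ t in -π..π, deriv H t * Complex.exp (-Complex.I * z * t)‖ ≤
      (∫ t in -π..π, ‖deriv H t‖) * exp (π * |z.im|) := by
    rw [← intervalIntegral.integral_mul_const]
    refine intervalIntegral.norm_integral_le_of_norm_le hπ (ae_of_all _ fun t ht => ?_)
      ((by fun_prop : Continuous fun t => ‖deriv H t‖ * exp (π * |z.im|)).intervalIntegrable _ _)
    rw [norm_mul]
    exact mul_le_mul_of_nonneg_left (hB t (Ioc_subset_Icc_self ht)) (norm_nonneg _)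
  calc ‖z‖ * ‖pwTransform H z‖
      = (2 * π)⁻¹ * ‖-Complex.I * z * ∫ t in -π..π, H t * Complex.exp (-Complex.I * z * t)‖ := by
        rw [pwTransform, integral_Icc_eq_integral_Ioc, ← intervalIntegral.integral_of_le hπ,
          norm_smul, norm_mul, norm_mul, norm_neg, Complex.norm_I, norm_of_nonneg (by positivity)]
        ring
    _ ≤ (2 * π)⁻¹ * (‖H π‖ * exp (π * |z.im|) + ‖H (-π)‖ * exp (π * |z.im|) +
          (∫ t in -π..π, ‖deriv H t‖) * exp (π * |z.im|)) := by
        rw [neg_I_mul_integral_mul_cexp hH]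
        gcongr
        refine (norm_sub_le _ _).trans (add_le_add ((norm_sub_le _ _).trans ?_) hrest)
        rw [norm_mul, norm_mul]
        exact add_le_add (by gcongr; exact hB π ⟨hπ, le_rfl⟩)
          (by gcongr; exact hB (-π) ⟨le_rfl, hπ⟩)
    _ = _ := by ring

lemma tendsto_norm_pwTransform_div_sqrt_of_contDiff {H : ℝ → ℂ} (hH : ContDiff ℝ 1 H) :
    Tendsto (fun z : ℂ => ‖pwTransform H z‖ / √(pwKernelDiag z.im))
      (comap (fun z : ℂ => ‖z‖) atTop) (𝓝 0) := by
  obtain ⟨C, hC⟩ := exists_norm_mul_norm_pwTransform_le hH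
  have hC0 : 0 ≤ C := by simpa using hC 0
  have hlim : Tendsto (fun r : ℝ => C * √(4 * π * r⁻¹ + (r⁻¹) ^ 2)) atTop (𝓝 0) := by
    have := ((tendsto_inv_atTop_zero.const_mul (4 * π)).add
      (tendsto_inv_atTop_zero.pow 2)).sqrt.const_mul C
    simpa using this
  refine squeeze_zero' (Eventually.of_forall fun z => by positivity) ?_ (hlim.comp tendsto_comap)
  filter_upwards [tendsto_comap.eventually (eventually_gt_atTop 0)] with z hz
  have hK := sqrt_pos.2 (pwKernelDiag_pos z.im)
  have habs : |z.im| ≤ ‖z‖ := Complex.abs_im_le_norm z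
  have hsq : √(4 * π * ‖z‖⁻¹ + (‖z‖⁻¹) ^ 2) = √(4 * π * ‖z‖ + 1) / ‖z‖ := by
    rw [show 4 * π * ‖z‖⁻¹ + (‖z‖⁻¹) ^ 2 = (4 * π * ‖z‖ + 1) / ‖z‖ ^ 2 by field_simp,
      sqrt_div' _ (sq_nonneg _), sqrt_sq hz.le]
  calc ‖pwTransform H z‖ / √(pwKernelDiag z.im)
      ≤ C * exp (π * |z.im|) / ‖z‖ / √(pwKernelDiag z.im) := by
        gcongr
        rw [le_div_iff₀ hz, mul_comm]
        exact hC z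
    _ ≤ C * (√(4 * π * |z.im| + 1) * √(pwKernelDiag z.im)) / ‖z‖ / √(pwKernelDiag z.im) := by
        gcongr
        exact exp_pi_abs_le_sqrt_mul_sqrt_pwKernelDiag z.im
    _ = C * (√(4 * π * |z.im| + 1) / ‖z‖) := by
        field_simp
    _ ≤ C * (√(4 * π * ‖z‖ + 1) / ‖z‖) := by gcongr
    _ = C * √(4 * π * ‖z‖⁻¹ + (‖z‖⁻¹) ^ 2) := by rw [hsq]

lemma tendsto_of_forall_exists_dist_le {α β : Type*} [PseudoMetricSpace β] {l : Filter α}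
    {f : α → β} {b : β}
    (h : ∀ ε > 0, ∃ g : α → β, Tendsto g l (𝓝 b) ∧ ∀ x, dist (f x) (g x) ≤ ε) :
    Tendsto f l (𝓝 b) := by
  refine Metric.tendsto_nhds.2 fun ε hε => ?_
  obtain ⟨g, hg, hfg⟩ := h (ε / 2) (half_pos hε)
  filter_upwards [Metric.tendsto_nhds.1 hg (ε / 2) (half_pos hε)] with x hx
  linarith [dist_triangle (f x) (g x) b, hfg x]

/-- **Weak boundary vanishing condition in the Paley–Wiener space `W(π)` (Lemma 3.2).**
For every `F ∈ L²([−π, π])` and `f(z) = (1/2π)∫_{−π}^{π} F(t)e^{−izt} dt`, one has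
`|f(z)|/√(K(z, z̄)) → 0` as `|z| → ∞`. -/
theorem stmt12 (F : ℝ → ℂ)
    (hF : MemLp F 2 (volume.restrict (Set.Icc (-Real.pi) Real.pi))) :
    Filter.Tendsto
      (fun z : ℂ => ‖pwTransform F z‖ / Real.sqrt (pwKernelDiag z.im))
      (Filter.comap (fun z : ℂ => ‖z‖) Filter.atTop) (nhds 0) := by
  refine tendsto_of_forall_exists_dist_le fun ε hε => ?_
  obtain ⟨H, hHc, hH, hFH⟩ := hF.exist_eLpNorm_sub_le ENNReal.ofNat_ne_top one_le_two hε
  have hHL2 : MemLp H 2 (volume.restrict (Icc (-π) π)) :=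
    hH.continuous.memLp_of_hasCompactSupport hHc
  refine ⟨_, tendsto_norm_pwTransform_div_sqrt_of_contDiff (hH.of_le (by norm_num)), fun z => ?_⟩
  have hK := sqrt_pos.2 (pwKernelDiag_pos z.im)
  rw [Real.dist_eq, ← sub_div, abs_div, abs_of_pos hK, div_le_iff₀ hK]
  calc |‖pwTransform F z‖ - ‖pwTransform H z‖|
      ≤ ‖pwTransform (F - H) z‖ := by
        rw [pwTransform_sub (hF.integrable one_le_two) (hHL2.integrable one_le_two)]
        exact abs_norm_sub_norm_le _ _
    _ ≤ (eLpNorm (F - H) 2 (volume.restrict (Icc (-π) π))).toReal / √(2 * π) *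
          √(pwKernelDiag z.im) := norm_pwTransform_le_eLpNorm_mul_sqrt (hF.sub hHL2) z
    _ ≤ ε * √(pwKernelDiag z.im) := by
        gcongr
        exact (div_le_self ENNReal.toReal_nonneg (one_le_sqrt.2 (by nlinarith [pi_gt_three]))).trans
          (ENNReal.toReal_le_of_le_ofReal hε.le hFH)
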